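/- arXiv:1705.00807 — 2 statements merged into one kernel-verified Lean document; each statement's English description precedes it below -/
import Mathlib

section
/- Let c₁ > 0, let n ≥ 2 be an integer, let q ∈ [0,1], and let q̂ = X/n where X ~ Poisson(nq). Then P(q̂ ∉ U(q;c₁)) ≤ 2·n^{−c₁/3}. -/
open scoped BigOperators Classical

/-- The Poisson(lam) probability mass function on the nonnegative integers. -/
noncomputable def poissonPMF (lam : ℝ) (k : ℕ) : ℝ :=
  Real.exp (-lam) * lam ^ k / (Nat.factorial k)

/-- The confidence interval `U(q; c₁)` from the paper. -/
noncomputable def Uset (c₁ : ℝ) (n : ℕ) (q : ℝ) : Set ℝ :=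
  if q ≤ c₁ * Real.log n / n then
    Set.Icc 0 (2 * c₁ * Real.log n / n)
  else
    Set.Icc (q - Real.sqrt (c₁ * q * Real.log n / n)) (q + Real.sqrt (c₁ * q * Real.log n / n))

/-!
Both tails of `X ~ Poisson(λ)` are Chernoff bounds: since `∑ₖ P(X = k) e^{tk} = exp (λ (eᵗ - 1))`,
`P(X ≥ a) ≤ exp (λ (eᵗ - 1) - t a)` for `t ≥ 0`, and symmetrically below `a` for `t ≤ 0`.
Put `λ = nq` and `L = c₁ ln n`, so that `n^{-c₁/3} = exp (-L/3)`. Above the threshold the event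
`q̂ ∉ U` is `|X - λ| > √(λ L)`; with `eᵗ ≤ 1 + t + 3t²/4` on `|t| ≤ 1` and `t = ±2x/(3λ)` each
tail is at most `exp (-x²/(3λ)) = exp (-L/3)`. Below the threshold `λ ≤ L`, the event is `X > 2L`,
and `t = ln 2` gives `exp (λ - 2 L ln 2) ≤ exp (-L/3)` because `ln 2 ≥ 2/3`.
-/

open Set

lemma poissonPMF_nonneg {lam : ℝ} (hlam : 0 ≤ lam) (k : ℕ) : 0 ≤ poissonPMF lam k := by
  unfold poissonPMF
  positivity

lemma hasSum_poissonPMF_mul_exp (lam t : ℝ) :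
    HasSum (fun k : ℕ => poissonPMF lam k * Real.exp (t * k))
      (Real.exp (lam * (Real.exp t - 1))) := by
  have hexp :=
    (NormedSpace.expSeries_div_hasSum_exp (lam * Real.exp t)).mul_left (Real.exp (-lam))
  rw [← Real.exp_eq_exp_ℝ, ← Real.exp_add] at hexp
  convert! hexp using 1
  · funext k
    unfold poissonPMF
    rw [mul_pow, ← Real.exp_nat_mul]
    ring_nf
  · ring_nf

lemma summable_poissonPMF (lam : ℝ) : Summable (poissonPMF lam) := by
  simpa using (hasSum_poissonPMF_mul_exp lam 0).summable

lemma Real.exp_le_one_add_add_three_div_four_mul_sq {t : ℝ} (ht : |t| ≤ 1) :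
    Real.exp t ≤ 1 + t + 3 / 4 * t ^ 2 := by
  have h := Real.exp_bound ht (n := 2) (by norm_num)
  rw [Finset.sum_range_succ, Finset.sum_range_one] at h
  norm_num [Nat.factorial] at h
  nlinarith [(abs_le.mp h).2, sq_abs t]

noncomputable def poissonProb (lam : ℝ) (S : Set ℕ) : ℝ :=
  ∑' k, S.indicator (poissonPMF lam) k

section poissonProb

variable {lam : ℝ}

lemma poissonProb_mono (hlam : 0 ≤ lam) {S T : Set ℕ} (h : S ⊆ T) :
    poissonProb lam S ≤ poissonProb lam T :=
  Summable.tsum_mono ((summable_poissonPMF lam).indicator S)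
    ((summable_poissonPMF lam).indicator T)
    (indicator_le_indicator_of_subset h (poissonPMF_nonneg hlam))

lemma poissonProb_union_le (hlam : 0 ≤ lam) (S T : Set ℕ) :
    poissonProb lam (S ∪ T) ≤ poissonProb lam S + poissonProb lam T := by
  have hsum := summable_poissonPMF lam
  rw [poissonProb, poissonProb, poissonProb, ← Summable.tsum_add (hsum.indicator S)
    (hsum.indicator T)]
  refine Summable.tsum_mono (hsum.indicator _) ((hsum.indicator S).add (hsum.indicator T))
    fun k => ?_
  rw [← Pi.add_apply, ← indicator_union_add_inter, Pi.add_apply]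
  exact le_add_of_nonneg_right (indicator_nonneg (fun k _ => poissonPMF_nonneg hlam k) k)

/-- Chernoff bound: on `S` the weight `exp (t (k - a))` is at least `1`. -/
lemma poissonProb_le_exp (hlam : 0 ≤ lam) {S : Set ℕ} {a t : ℝ}
    (hS : ∀ k ∈ S, t * a ≤ t * k) :
    poissonProb lam S ≤ Real.exp (lam * (Real.exp t - 1) - t * a) := by
  have hmgf := (hasSum_poissonPMF_mul_exp lam t).mul_right (Real.exp (-(t * a)))
  have hle : ∀ k, S.indicator (poissonPMF lam) k ≤
      poissonPMF lam k * Real.exp (t * k) * Real.exp (-(t * a)) := by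
    intro k
    rw [mul_assoc, ← Real.exp_add]
    by_cases hk : k ∈ S
    · rw [indicator_of_mem hk]
      exact le_mul_of_one_le_right (poissonPMF_nonneg hlam k)
        (Real.one_le_exp (by linarith [hS k hk]))
    · rw [indicator_of_notMem hk]
      exact mul_nonneg (poissonPMF_nonneg hlam k) (Real.exp_pos _).le
  calc poissonProb lam S
      ≤ ∑' k : ℕ, poissonPMF lam k * Real.exp (t * k) * Real.exp (-(t * a)) :=
        Summable.tsum_le_tsum hle ((summable_poissonPMF lam).indicator S) hmgf.summable
    _ = Real.exp (lam * (Real.exp t - 1) - t * a) := by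
        rw [hmgf.tsum_eq, ← Real.exp_add]
        ring_nf

lemma poissonProb_add_lt_le (hlam : 0 < lam) {x : ℝ} (hx0 : 0 ≤ x) (hx : x ≤ lam) :
    poissonProb lam {k | lam + x < k} ≤ Real.exp (-(x ^ 2 / (3 * lam))) := by
  set t := 2 * x / (3 * lam)
  have ht0 : 0 ≤ t := by positivity
  have ht : |t| ≤ 1 := by
    rw [abs_of_nonneg ht0, div_le_one (by positivity)]
    linarith
  refine (poissonProb_le_exp hlam.le (a := lam + x) (t := t)
    fun k hk => mul_le_mul_of_nonneg_left hk.le ht0).trans (Real.exp_le_exp.mpr ?_)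
  have hquad := mul_le_mul_of_nonneg_left (Real.exp_le_one_add_add_three_div_four_mul_sq ht)
    hlam.le
  have hopt : 3 / 4 * lam * t ^ 2 - t * x = -(x ^ 2 / (3 * lam)) := by
    simp only [t]
    field_simp
    ring
  nlinarith

lemma poissonProb_lt_sub_le (hlam : 0 < lam) {x : ℝ} (hx0 : 0 ≤ x) (hx : x ≤ lam) :
    poissonProb lam {k | k < lam - x} ≤ Real.exp (-(x ^ 2 / (3 * lam))) := by
  set t := -(2 * x / (3 * lam))
  have ht0 : t ≤ 0 := by simp only [t, neg_nonpos]; positivity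
  have ht : |t| ≤ 1 := by
    rw [abs_of_nonpos ht0, neg_neg, div_le_one (by positivity)]
    linarith
  refine (poissonProb_le_exp hlam.le (a := lam - x) (t := t)
    fun k hk => mul_le_mul_of_nonpos_left (le_of_lt hk) ht0).trans (Real.exp_le_exp.mpr ?_)
  have hquad := mul_le_mul_of_nonneg_left (Real.exp_le_one_add_add_three_div_four_mul_sq ht)
    hlam.le
  have hopt : 3 / 4 * lam * t ^ 2 + t * x = -(x ^ 2 / (3 * lam)) := by
    simp only [t]
    field_simp
    ring
  nlinarith

lemma poissonProb_lt_abs_sub_le (hlam : 0 < lam) {x : ℝ} (hx0 : 0 ≤ x) (hx : x ≤ lam) :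
    poissonProb lam {k | x < |k - lam|} ≤ 2 * Real.exp (-(x ^ 2 / (3 * lam))) := by
  have hsub : {k : ℕ | x < |k - lam|} ⊆ {k | k < lam - x} ∪ {k | lam + x < k} := by
    intro k hk
    rcases lt_abs.mp (show x < |(k : ℝ) - lam| from hk) with h | h
    · exact Or.inr (by simp only [mem_ofPred_eq]; linarith)
    · exact Or.inl (by simp only [mem_ofPred_eq]; linarith)
  calc poissonProb lam {k | x < |k - lam|}
      ≤ poissonProb lam {k | k < lam - x} + poissonProb lam {k | lam + x < k} :=
        (poissonProb_mono hlam.le hsub).trans (poissonProb_union_le hlam.le _ _)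
    _ ≤ 2 * Real.exp (-(x ^ 2 / (3 * lam))) := by
        linarith [poissonProb_lt_sub_le hlam hx0 hx, poissonProb_add_lt_le hlam hx0 hx]

lemma poissonProb_sqrt_mul_lt_abs_sub_le {L : ℝ} (hL : 0 ≤ L) (h : L < lam) :
    poissonProb lam {k | √(lam * L) < |k - lam|} ≤ 2 * Real.exp (-(L / 3)) := by
  have hlam : 0 < lam := hL.trans_lt h
  have hx : √(lam * L) ≤ lam := Real.sqrt_le_iff.mpr ⟨hlam.le, by nlinarith⟩
  have hexponent : √(lam * L) ^ 2 / (3 * lam) = L / 3 := by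
    rw [Real.sq_sqrt (by positivity)]
    field_simp
  simpa only [hexponent] using poissonProb_lt_abs_sub_le hlam (Real.sqrt_nonneg _) hx

lemma poissonProb_two_mul_lt_le (hlam : 0 ≤ lam) {L : ℝ} (h : lam ≤ L) :
    poissonProb lam {k | 2 * L < k} ≤ Real.exp (-(L / 3)) := by
  refine (poissonProb_le_exp hlam (a := 2 * L) (t := Real.log 2)
    fun k hk => mul_le_mul_of_nonneg_left hk.le (Real.log_nonneg one_le_two)).trans
    (Real.exp_le_exp.mpr ?_)
  rw [Real.exp_log two_pos]
  nlinarith [Real.log_two_gt_d9]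

end poissonProb

lemma setOf_div_notMem_Icc_zero_subset {n : ℝ} (hn : 0 < n) (b : ℝ) :
    {k : ℕ | (k : ℝ) / n ∉ Icc 0 (b / n)} ⊆ {k | b < k} := by
  intro k hk
  simp only [mem_ofPred_eq, mem_Icc, not_and, not_le] at hk ⊢
  exact (div_lt_div_iff_of_pos_right hn).mp (hk (by positivity))

lemma setOf_div_notMem_Icc_subset {n : ℝ} (hn : 0 < n) (q s : ℝ) :
    {k : ℕ | (k : ℝ) / n ∉ Icc (q - s) (q + s)} ⊆ {k | s * n < |k - n * q|} := by
  intro k hk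
  have hks : s < |(k : ℝ) / n - q| := by
    rwa [mem_ofPred_eq, ← mem_Icc_iff_abs_le, not_le, abs_sub_comm] at hk
  calc s * n < |(k : ℝ) / n - q| * n := mul_lt_mul_of_pos_right hks hn
    _ = |k - n * q| := by
      rw [show (k : ℝ) - n * q = ((k : ℝ) / n - q) * n by field_simp, abs_mul, abs_of_pos hn]

/-- `P(q̂ ∉ U(q;c₁)) ≤ 2 n^{-c₁/3}` for `q̂ = X/n`, `X ~ Poisson(nq)`. -/
theorem poisson_confidence (c₁ : ℝ) (hc₁ : 0 < c₁) (n : ℕ) (hn : 2 ≤ n)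
    (q : ℝ) (hq : q ∈ Set.Icc (0 : ℝ) 1) :
    (∑' k : ℕ, if ((k : ℝ) / n) ∈ Uset c₁ n q then 0 else poissonPMF (n * q) k) ≤
      2 * (n : ℝ) ^ (-(c₁ / 3)) := by
  have hn0 : (0 : ℝ) < n := by positivity
  have hL : 0 < c₁ * Real.log n := mul_pos hc₁ (Real.log_pos (by exact_mod_cast hn))
  have hlam : 0 ≤ n * q := mul_nonneg hn0.le hq.1
  have hpow : (n : ℝ) ^ (-(c₁ / 3)) = Real.exp (-(c₁ * Real.log n / 3)) := by
    rw [Real.rpow_def_of_pos hn0]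
    ring_nf
  have hsum : (∑' k : ℕ, if ((k : ℝ) / n) ∈ Uset c₁ n q then 0 else poissonPMF (n * q) k) =
      poissonProb (n * q) {k | (k : ℝ) / n ∉ Uset c₁ n q} := by
    simp only [poissonProb, indicator_apply, mem_ofPred_eq, ite_not]
  rw [hsum, hpow]
  unfold Uset
  split_ifs with hsmall
  · have hlamL : n * q ≤ c₁ * Real.log n := by
      linarith [(le_div_iff₀ hn0).mp hsmall]
    have hsub := setOf_div_notMem_Icc_zero_subset hn0 (2 * c₁ * Real.log n)
    rw [mul_assoc] at hsub ⊢
    calc _ ≤ _ := poissonProb_mono hlam hsub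
      _ ≤ _ := poissonProb_two_mul_lt_le hlam hlamL
      _ ≤ _ := by linarith [Real.exp_pos (-(c₁ * Real.log n / 3))]
  · have hLlam : c₁ * Real.log n < n * q := by
      linarith [(div_lt_iff₀ hn0).mp (not_le.mp hsmall)]
    have hs : √(c₁ * q * Real.log n / n) * n = √(n * q * (c₁ * Real.log n)) := by
      rw [show (n : ℝ) * q * (c₁ * Real.log n) = c₁ * q * Real.log n / n * n ^ 2 by
        field_simp, Real.sqrt_mul' _ (sq_nonneg _), Real.sqrt_sq hn0.le]
    have hsub := setOf_div_notMem_Icc_subset hn0 q √(c₁ * q * Real.log n / n)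
    rw [hs] at hsub
    exact (poissonProb_mono hlam hsub).trans (poissonProb_sqrt_mul_lt_abs_sub_le hL.le hLlam)
end

section
/- Let n be a positive integer, p ≥ 0, q ≥ 0, and j a nonnegative integer, and let X = Y/n where Y ~ Poisson(np). Define g_{j,q}(X) = Σ_{k=0}^{j} C(j,k)·(−q)^{j−k}·∏_{h=0}^{k−1}(X − h/n), where the empty product (k = 0) equals 1. Then E[g_{j,q}(X)] = (p − q)^j and E[(g_{j,q}(X))²] = Σ_{k=0}^{j} C(j,k)²·(p − q)^{2(j−k)}·p^k·k!/n^k. Moreover, if p > 0 and M ≥ max{ n(p−q)²/p, j }, then E[(g_{j,q}(X))²] ≤ (2Mp/n)^j. -/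
open scoped BigOperators

/-- Expectation of `f` under the Poisson(lam) distribution. -/
noncomputable def poissonE (lam : ℝ) (f : ℕ → ℝ) : ℝ :=
  ∑' k : ℕ, poissonPMF lam k * f k

/-- The estimator `g_{j,q}(X) = Σ_{k=0}^{j} C(j,k)·(−q)^{j−k}·∏_{h=0}^{k−1}(X − h/n)`
(the empty product, for `k = 0`, equals `1`). -/
noncomputable def gEst (n : ℕ) (q : ℝ) (j : ℕ) (X : ℝ) : ℝ :=
  ∑ k ∈ Finset.range (j + 1),
    (Nat.choose j k : ℝ) * (-q) ^ (j - k) * ∏ h ∈ Finset.range k, (X - (h : ℝ) / n)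

/-!
With `Y = n X ~ Poisson(λ)`, `λ = n p`, the product `∏_{h<k} (X - h/n)` is the falling factorial
`Y^{(k)} / n^k`. The size-bias identity `E[Y^{(k)} f(Y)] = λ^k E[f(Y + k)]` gives `E[Y^{(k)}] = λ^k`,
so `E[g_{j,q}(X)]` is the binomial expansion of `(p - q)^j`. Together with Vandermonde's identity for
falling factorials it gives `E[Y^{(k)} Y^{(l)}] = ∑_i C(k,i) C(l,i) i! λ^{k+l-i}`; in the resulting
triple sum the sums over `k` and `l` collapse by
`∑_k C(j,k) C(k,i) p^{k-i} (-q)^{j-k} = C(j,i) (p - q)^{j-i}`.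
The bound follows termwise from `i! C(j,i) ≤ j^i ≤ M^i` and `(p - q)^2 ≤ M p / n`, and `∑_i C(j,i) = 2^j`.
-/

open Finset Nat

lemma prod_range_natCast_sub_eq_descFactorial {R : Type*} [CommRing R] (y k : ℕ) :
    ∏ h ∈ range k, ((y : R) - h) = y.descFactorial k := by
  rw [← descPochhammer_eval_eq_prod_range, descPochhammer_eval_eq_descFactorial]

lemma Nat.add_descFactorial_eq_sum_choose_mul (m k l : ℕ) :
    (m + k).descFactorial l =
      ∑ i ∈ range (l + 1), l.choose i * k.descFactorial i * m.descFactorial (l - i) := by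
  rw [descFactorial_eq_factorial_mul_choose, add_comm, add_choose_eq,
    Nat.sum_antidiagonal_eq_sum_range_succ (fun i i' => k.choose i * m.choose i'), mul_sum]
  refine sum_congr rfl fun i hi => ?_
  rw [descFactorial_eq_factorial_mul_choose, descFactorial_eq_factorial_mul_choose,
    ← choose_mul_factorial_mul_factorial (Nat.le_of_lt_succ (mem_range.1 hi))]
  ring

lemma choose_mul_pow_sub_mul_pow {M : Type*} [CommSemiring M] (x : M) (k i : ℕ) :
    (k.choose i : M) * (x ^ (k - i) * x ^ i) = k.choose i * x ^ k := by
  rcases le_or_gt i k with hik | hki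
  · rw [pow_sub_mul_pow x hik]
  · simp [choose_eq_zero_of_lt hki]

lemma sum_choose_mul_choose_mul_pow {R : Type*} [CommSemiring R] (x y : R) {i j : ℕ}
    (hij : i ≤ j) :
    ∑ k ∈ range (j + 1), (j.choose k * k.choose i : R) * x ^ (k - i) * y ^ (j - k) =
      j.choose i * (x + y) ^ (j - i) := by
  obtain ⟨d, rfl⟩ := Nat.exists_eq_add_of_le hij
  rw [add_assoc, sum_range_add, add_pow, mul_sum, Nat.add_sub_cancel_left]
  have hlow : ∀ k ∈ range i, (((i + d).choose k * k.choose i : ℕ) : R) * x ^ (k - i) *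
      y ^ (i + d - k) = 0 := fun k hk => by
    simp [choose_eq_zero_of_lt (mem_range.1 hk)]
  rw [sum_eq_zero (by exact_mod_cast hlow), zero_add]
  refine sum_congr rfl fun m _ => ?_
  rw [← Nat.cast_mul, Nat.choose_mul (Nat.le_add_right i m), Nat.add_sub_cancel_left,
    Nat.add_sub_cancel_left, Nat.add_sub_add_left]
  push_cast
  ring

theorem hasSum_poissonPMF (lam : ℝ) : HasSum (poissonPMF lam) 1 := by
  have h := (NormedSpace.expSeries_div_hasSum_exp lam).mul_left (Real.exp (-lam))
  rw [← Real.exp_eq_exp_ℝ, ← Real.exp_add, neg_add_cancel, Real.exp_zero] at h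
  exact h.congr_fun fun k => by rw [poissonPMF, mul_div_assoc]

lemma poissonPMF_add_mul_descFactorial (lam : ℝ) (m k : ℕ) :
    poissonPMF lam (m + k) * (m + k).descFactorial k = lam ^ k * poissonPMF lam m := by
  have h := factorial_mul_descFactorial (Nat.le_add_left k m)
  rw [Nat.add_sub_cancel] at h
  have hm : (m ! : ℝ) ≠ 0 := by positivity
  rw [poissonPMF, poissonPMF, ← h, pow_add]
  push_cast
  field_simp

theorem HasSum.poissonPMF_mul_descFactorial_mul {lam a : ℝ} {f : ℕ → ℝ} (k : ℕ)
    (hf : HasSum (fun m => poissonPMF lam m * f (m + k)) a) :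
    HasSum (fun y => poissonPMF lam y * y.descFactorial k * f y) (lam ^ k * a) := by
  rw [← hasSum_nat_add_iff' k]
  have hlow : ∑ y ∈ range k, poissonPMF lam y * y.descFactorial k * f y = 0 :=
    sum_eq_zero fun y hy => by
      simp [descFactorial_eq_zero_iff_lt.2 (mem_range.1 hy)]
  rw [hlow, sub_zero]
  exact (hf.mul_left (lam ^ k)).congr_fun fun m => by
    rw [poissonPMF_add_mul_descFactorial]
    ring

theorem hasSum_poissonPMF_mul_descFactorial (lam : ℝ) (k : ℕ) :
    HasSum (fun y => poissonPMF lam y * y.descFactorial k) (lam ^ k) := by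
  have h := HasSum.poissonPMF_mul_descFactorial_mul (f := fun _ => 1) k
    ((hasSum_poissonPMF lam).congr_fun fun m => mul_one (poissonPMF lam m))
  rw [mul_one] at h
  exact h.congr_fun fun y => (mul_one _).symm

theorem hasSum_poissonPMF_mul_descFactorial_mul_descFactorial (lam : ℝ) (k l : ℕ) :
    HasSum (fun y => poissonPMF lam y * y.descFactorial k * y.descFactorial l)
      (∑ i ∈ range (l + 1),
        k.choose i * l.choose i * i ! * (lam ^ (k - i) * lam ^ (l - i) * lam ^ i)) := by
  have hterms : ∀ i ∈ range (l + 1), HasSum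
      (fun m => (l.choose i * k.descFactorial i : ℝ) * (poissonPMF lam m * m.descFactorial (l - i)))
      (l.choose i * k.descFactorial i * lam ^ (l - i)) := fun i _ =>
    (hasSum_poissonPMF_mul_descFactorial lam (l - i)).mul_left _
  have hshift : HasSum (fun m => poissonPMF lam m * (m + k).descFactorial l)
      (∑ i ∈ range (l + 1), l.choose i * k.descFactorial i * lam ^ (l - i)) := by
    refine (hasSum_sum hterms).congr_fun fun m => ?_
    rw [Nat.add_descFactorial_eq_sum_choose_mul, Nat.cast_sum, mul_sum]
    refine sum_congr rfl fun i _ => ?_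
    push_cast
    ring
  have hvalue : lam ^ k * ∑ i ∈ range (l + 1), l.choose i * k.descFactorial i * lam ^ (l - i) =
      ∑ i ∈ range (l + 1),
        k.choose i * l.choose i * i ! * (lam ^ (k - i) * lam ^ (l - i) * lam ^ i) := by
    rw [mul_sum]
    refine sum_congr rfl fun i _ => ?_
    rw [descFactorial_eq_factorial_mul_choose]
    push_cast
    linear_combination (-(l.choose i * i ! * lam ^ (l - i)) : ℝ) *
      choose_mul_pow_sub_mul_pow lam k i
  rw [← hvalue]
  exact HasSum.poissonPMF_mul_descFactorial_mul (f := fun y => (y.descFactorial l : ℝ)) k hshift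

lemma gEst_natCast_div (n : ℕ) (q : ℝ) (j y : ℕ) :
    gEst n q j (y / n) =
      ∑ k ∈ range (j + 1), (j.choose k * (-q) ^ (j - k) / n ^ k : ℝ) * y.descFactorial k := by
  refine sum_congr rfl fun k _ => ?_
  simp_rw [div_sub_div_same, prod_div_distrib, prod_const, card_range,
    prod_range_natCast_sub_eq_descFactorial]
  ring

theorem poissonE_gEst (n : ℕ) (p q : ℝ) (j : ℕ) (hn : n ≠ 0) :
    poissonE (n * p) (fun y => gEst n q j (y / n)) = (p - q) ^ j := by
  have hterms : ∀ k ∈ range (j + 1), HasSum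
      (fun y => (j.choose k * (-q) ^ (j - k) / n ^ k : ℝ) *
        (poissonPMF (n * p) y * y.descFactorial k))
      (j.choose k * (-q) ^ (j - k) / n ^ k * (n * p) ^ k) := fun k _ =>
    (hasSum_poissonPMF_mul_descFactorial _ k).mul_left _
  unfold poissonE
  rw [((hasSum_sum hterms).congr_fun fun y => ?_).tsum_eq, sub_eq_add_neg, add_pow]
  · refine sum_congr rfl fun k _ => ?_
    rw [mul_pow]
    field_simp
  · dsimp only
    rw [gEst_natCast_div, mul_sum]
    exact sum_congr rfl fun k _ => by ring

lemma sum_gEst_coeff_mul_choose (n : ℕ) (p q : ℝ) {i j : ℕ} (hn : n ≠ 0) (hij : i ≤ j) :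
    ∑ k ∈ range (j + 1), (j.choose k * (-q) ^ (j - k) / n ^ k : ℝ) * k.choose i * (n * p) ^ (k - i) =
      j.choose i * (p - q) ^ (j - i) / n ^ i := by
  rw [sub_eq_add_neg, ← sum_choose_mul_choose_mul_pow p (-q) hij, sum_div]
  refine sum_congr rfl fun k _ => ?_
  have hk := choose_mul_pow_sub_mul_pow (n : ℝ) k i
  field_simp
  linear_combination (j.choose k * p ^ (k - i) * (-q) ^ (j - k) : ℝ) * hk

lemma sum_sum_mul_sum_choose_mul_pow {R : Type*} [CommSemiring R] (s : Finset ℕ) (a : ℕ → R)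
    (x : R) :
    ∑ k ∈ s, ∑ l ∈ s, a k * a l *
        ∑ i ∈ s, k.choose i * l.choose i * i ! * (x ^ (k - i) * x ^ (l - i) * x ^ i) =
      ∑ i ∈ s, (∑ k ∈ s, a k * k.choose i * x ^ (k - i)) ^ 2 * (i ! * x ^ i) := by
  simp_rw [sq, sum_mul_sum, sum_mul, mul_sum]
  conv_lhs => arg 2; ext k; rw [sum_comm]
  rw [sum_comm]
  exact sum_congr rfl fun i _ => sum_congr rfl fun k _ => sum_congr rfl fun l _ => by ring

theorem poissonE_gEst_sq (n : ℕ) (p q : ℝ) (j : ℕ) (hn : n ≠ 0) :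
    poissonE (n * p) (fun y => gEst n q j (y / n) ^ 2) =
      ∑ i ∈ range (j + 1),
        (j.choose i : ℝ) ^ 2 * (p - q) ^ (2 * (j - i)) * p ^ i * i ! / n ^ i := by
  set lam : ℝ := n * p
  set a : ℕ → ℝ := fun k => j.choose k * (-q) ^ (j - k) / n ^ k
  have hterms : ∀ k ∈ range (j + 1), ∀ l ∈ range (j + 1), HasSum
      (fun y => a k * a l * (poissonPMF lam y * y.descFactorial k * y.descFactorial l))
      (a k * a l * ∑ i ∈ range (j + 1),
        k.choose i * l.choose i * i ! * (lam ^ (k - i) * lam ^ (l - i) * lam ^ i)) := by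
    intro k _ l hl
    have hextend : ∑ i ∈ range (l + 1),
          k.choose i * l.choose i * i ! * (lam ^ (k - i) * lam ^ (l - i) * lam ^ i) =
        ∑ i ∈ range (j + 1),
          k.choose i * l.choose i * i ! * (lam ^ (k - i) * lam ^ (l - i) * lam ^ i) :=
      sum_subset (range_subset_range.2 (mem_range.1 hl)) fun i _ hi => by
        rw [choose_eq_zero_of_lt (not_le.1 (mt mem_range_succ_iff.2 hi))]
        simp
    rw [← hextend]
    exact (hasSum_poissonPMF_mul_descFactorial_mul_descFactorial lam k l).mul_left _
  have hsum := hasSum_sum fun k hk => hasSum_sum fun l hl => hterms k hk l hl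
  unfold poissonE
  rw [(hsum.congr_fun fun y => ?_).tsum_eq]
  · rw [sum_sum_mul_sum_choose_mul_pow]
    refine sum_congr rfl fun i hi => ?_
    rw [sum_gEst_coeff_mul_choose n p q hn (mem_range_succ_iff.1 hi), div_pow, mul_pow, mul_pow,
      pow_mul']
    field_simp
  · dsimp only
    rw [gEst_natCast_div, sq, sum_mul_sum, mul_sum]
    refine sum_congr rfl fun k _ => ?_
    rw [mul_sum]
    exact sum_congr rfl fun l _ => by ring

theorem sum_choose_sq_mul_le (n : ℕ) {p q M : ℝ} (j : ℕ) (hn : n ≠ 0) (hp : 0 < p)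
    (hM : max (n * (p - q) ^ 2 / p) j ≤ M) :
    ∑ i ∈ range (j + 1),
        (j.choose i : ℝ) ^ 2 * (p - q) ^ (2 * (j - i)) * p ^ i * i ! / n ^ i ≤
      (2 * M * p / n) ^ j := by
  have hn' : (0 : ℝ) < n := by positivity
  have hjM : (j : ℝ) ≤ M := (le_max_right _ _).trans hM
  have hM0 : 0 ≤ M := (Nat.cast_nonneg j).trans hjM
  have hpq : (p - q) ^ 2 ≤ M * (p / n) := by
    have h := (le_max_left _ _).trans hM
    rw [div_le_iff₀ hp] at h
    rw [mul_div_assoc', le_div_iff₀ hn']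
    linarith
  have hterm : ∀ i ∈ range (j + 1),
      (j.choose i : ℝ) ^ 2 * (p - q) ^ (2 * (j - i)) * p ^ i * i ! / n ^ i ≤
        j.choose i * (M * (p / n)) ^ j := by
    intro i hi
    have hij := mem_range_succ_iff.1 hi
    have hdesc : (i ! * j.choose i : ℝ) ≤ M ^ i := by
      rw [← Nat.cast_mul, ← descFactorial_eq_factorial_mul_choose]
      exact (Nat.cast_le.2 (descFactorial_le_pow j i)).trans (by push_cast; gcongr)
    calc (j.choose i : ℝ) ^ 2 * (p - q) ^ (2 * (j - i)) * p ^ i * i ! / n ^ i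
        = j.choose i * (i ! * j.choose i) * ((p - q) ^ 2) ^ (j - i) * (p / n) ^ i := by
          rw [pow_mul, div_pow]
          ring
      _ ≤ j.choose i * M ^ i * (M * (p / n)) ^ (j - i) * (p / n) ^ i := by gcongr
      _ = j.choose i * (M * (p / n)) ^ j := by
          rw [mul_pow, mul_pow, ← pow_sub_mul_pow M hij, ← pow_sub_mul_pow (p / n) hij]
          ring
  calc _ ≤ ∑ i ∈ range (j + 1), j.choose i * (M * (p / n)) ^ j := sum_le_sum hterm
    _ = (2 * M * p / n) ^ j := by
      rw [← sum_mul, ← Nat.cast_sum, Nat.sum_range_choose, Nat.cast_pow, Nat.cast_ofNat,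
        ← mul_pow]
      ring

theorem gEst_moments_general (n : ℕ) (hn : 0 < n) (p q : ℝ) (j : ℕ) :
    poissonE (n * p) (fun y => gEst n q j ((y : ℝ) / n)) = (p - q) ^ j ∧
    poissonE (n * p) (fun y => (gEst n q j ((y : ℝ) / n)) ^ 2) =
      ∑ k ∈ Finset.range (j + 1),
        (Nat.choose j k : ℝ) ^ 2 * (p - q) ^ (2 * (j - k)) * p ^ k * (Nat.factorial k) /
          (n : ℝ) ^ k ∧
    ∀ M : ℝ, 0 < p → max ((n : ℝ) * (p - q) ^ 2 / p) (j : ℝ) ≤ M →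
      poissonE (n * p) (fun y => (gEst n q j ((y : ℝ) / n)) ^ 2) ≤
        (2 * M * p / n) ^ j := by
  refine ⟨poissonE_gEst n p q j hn.ne', poissonE_gEst_sq n p q j hn.ne', fun M hp hM => ?_⟩
  rw [poissonE_gEst_sq n p q j hn.ne']
  exact sum_choose_sq_mul_le n j hn.ne' hp hM

/-- `g_{j,q}(X)`, `X = Y/n`, `Y ~ Poisson(np)`, is unbiased for `(p−q)^j`;
its second moment is given exactly, and is bounded by `(2Mp/n)^j` when
`M ≥ max{n(p−q)²/p, j}`. -/
theorem gEst_moments (n : ℕ) (hn : 0 < n) (p q : ℝ) (hp : 0 ≤ p) (hq : 0 ≤ q) (j : ℕ) :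
    poissonE (n * p) (fun y => gEst n q j ((y : ℝ) / n)) = (p - q) ^ j ∧
    poissonE (n * p) (fun y => (gEst n q j ((y : ℝ) / n)) ^ 2) =
      ∑ k ∈ Finset.range (j + 1),
        (Nat.choose j k : ℝ) ^ 2 * (p - q) ^ (2 * (j - k)) * p ^ k * (Nat.factorial k) /
          (n : ℝ) ^ k ∧
    ∀ M : ℝ, 0 < p → max ((n : ℝ) * (p - q) ^ 2 / p) (j : ℝ) ≤ M →
      poissonE (n * p) (fun y => (gEst n q j ((y : ℝ) / n)) ^ 2) ≤
        (2 * M * p / n) ^ j :=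
  gEst_moments_general n hn p q j
end
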